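/- Let X be an infinite set and let τ_cof(X) be the cofinite topology on X. Then the following conditions are equivalent: (i) F_d(τ_cof(X)) holds, i.e. the intersection of any two τ_cof(X)-dense subsets of X is τ_cof(X)-dense; (ii) the space ⟨X, τ_cof(X)⟩ is irresolvable, i.e. there is no τ_cof(X)-dense set D ⊆ X with X \ D also τ_cof(X)-dense; (iii) X is amorphous, i.e. every infinite subset of X has finite complement in X. -/
import Mathlib


variable {X : Type*}

/-- The cofinite topology on X, as a family of sets. -/
def cofFam (X : Type*) : Set (Set X) := {∅} ∪ {U : Set X | Uᶜ.Finite}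

/-- D is dense w.r.t. the family τ. -/
def GDense (τ : Set (Set X)) (D : Set X) : Prop :=
  ∀ U ∈ τ, U.Nonempty → (U ∩ D).Nonempty

lemma gdense_iff_infinite [Infinite X] (D : Set X) :
    GDense (cofFam X) D ↔ D.Infinite := by
  constructor
  · intro h
    by_contra hfin
    rw [Set.not_infinite] at hfin
    have hU : Dᶜ ∈ cofFam X := Or.inr (by simpa using hfin)
    have hne : (Dᶜ : Set X).Nonempty := by
      rcases (Set.infinite_univ (α := X)).diff hfin |>.nonempty with ⟨x, hx⟩
      exact ⟨x, hx.2⟩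
    rcases h _ hU hne with ⟨x, hx1, hx2⟩
    exact hx1 hx2
  · intro hD U hU hne
    rcases hU with hU | hU
    · simp only [Set.mem_singleton_iff] at hU
      subst hU
      exact absurd hne (by simp)
    · have : (D \ Uᶜ).Infinite := hD.diff hU
      rcases this.nonempty with ⟨x, hxD, hxU⟩
      exact ⟨x, by simpa using hxU, hxD⟩

theorem stmt19 (X : Type*) [Infinite X] :
    ((∀ A B : Set X, GDense (cofFam X) A → GDense (cofFam X) B →
        GDense (cofFam X) (A ∩ B)) ↔
      ¬ ∃ D : Set X, GDense (cofFam X) D ∧ GDense (cofFam X) Dᶜ) ∧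
    ((¬ ∃ D : Set X, GDense (cofFam X) D ∧ GDense (cofFam X) Dᶜ) ↔
      ∀ Z : Set X, Z.Infinite → Zᶜ.Finite) := by
  simp only [gdense_iff_infinite]
  constructor
  · constructor
    · intro h ⟨D, hD, hDc⟩
      have := h D Dᶜ hD hDc
      rw [Set.inter_compl_self] at this
      exact this Set.finite_empty
    · intro h A B hA hB
      have hAc : Aᶜ.Finite := by
        by_contra hc
        exact h ⟨Aᶜ, hc, by simpa using hA⟩
      have hBc : Bᶜ.Finite := by
        by_contra hc
        exact h ⟨Bᶜ, hc, by simpa using hB⟩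
      intro hfin
      have : Set.Finite (Set.univ : Set X) := by
        have : (Set.univ : Set X) = (A ∩ B) ∪ (Aᶜ ∪ Bᶜ) := by
          ext x; by_cases hx : x ∈ A <;> by_cases hy : x ∈ B <;> simp [hx, hy]
        rw [this]
        exact hfin.union (hAc.union hBc)
      exact Set.infinite_univ this
  · constructor
    · intro h Z hZ
      by_contra hc
      exact h ⟨Z, hZ, hc⟩
    · rintro h ⟨D, hD, hDc⟩
      exact hDc (h D hD)
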